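/- For block sizes (2,1,3,2), the polynomial L_{(4,7)} = x_{3,4}x_{4,7} + x_{3,5}x_{5,7} + x_{3,6}x_{6,7} is invariant under conjugation of the generic nilradical 8×8 matrix by every upper unitriangular matrix. -/

import Mathlib

/-!
On the nilradical, `L_{(4,7)}(Z)` is the `(3,7)` entry of `Z²` (zero-based indices: `(2,6)`).
Conjugation by an upper unitriangular `g` preserves the nilradical and commutes with squaring,
and `Z²` lies in the square of the nilradical, where an entry vanishes unless its column block
exceeds its row block by at least two. There every other entry `(j,k)` with `j ≥ 3`, `k ≤ 7`
vanishes, so `(g Z² g⁻¹)_{3,7} = g_{3,3} (Z²)_{3,7} (g⁻¹)_{7,7} = (Z²)_{3,7}`.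
-/

open Matrix

/-- Block map for the block sizes `(2,1,3,2)` of `gl(8)`:
blocks `{1,2}, {3}, {4,5,6}, {7,8}`. -/
def blk8 (i : Fin 8) : ℕ :=
  if (i : ℕ) < 2 then 0 else if (i : ℕ) < 3 then 1 else if (i : ℕ) < 6 then 2 else 3

/-- `L_{(4,7)} = x_{3,4} x_{4,7} + x_{3,5} x_{5,7} + x_{3,6} x_{6,7}`. -/
def L47 {K : Type*} [Field K] (X : Matrix (Fin 8) (Fin 8) K) : K :=
  X 2 3 * X 3 6 + X 2 4 * X 4 6 + X 2 5 * X 5 6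

open Finset

namespace Matrix

variable {m R : Type*}

/-- `BlockStrictUpper b d M`: the entry `M i j` vanishes unless `b i + d < b j`. For `d = 0`
this is the nilradical of the parabolic subalgebra with blocks `b`, and `d + 1` is the
corresponding power of it. -/
def BlockStrictUpper [Zero R] (b : m → ℕ) (d : ℕ) (M : Matrix m m R) : Prop :=
  ∀ i j, ¬ b i + d < b j → M i j = 0

section BlockStrictUpper

variable [Fintype m] [NonUnitalNonAssocSemiring R] {b : m → ℕ} {d e : ℕ} {M N g : Matrix m m R}

theorem BlockStrictUpper.mul (hM : BlockStrictUpper b d M) (hN : BlockStrictUpper b e N) :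
    BlockStrictUpper b (d + e + 1) (M * N) := by
  intro i j hij
  refine sum_eq_zero fun k _ => ?_
  dsimp only
  by_cases hik : b i + d < b k
  · rw [hN k j (by omega), mul_zero]
  · rw [hM i k hik, zero_mul]

theorem BlockStrictUpper.blockTriangular_mul (hg : g.BlockTriangular b)
    (hM : BlockStrictUpper b d M) : BlockStrictUpper b d (g * M) := by
  intro i j hij
  refine sum_eq_zero fun k _ => ?_
  dsimp only
  by_cases hki : b k < b i
  · rw [hg hki, zero_mul]
  · rw [hM k j (by omega), mul_zero]

theorem BlockStrictUpper.mul_blockTriangular (hg : g.BlockTriangular b)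
    (hM : BlockStrictUpper b d M) : BlockStrictUpper b d (M * g) := by
  intro i j hij
  refine sum_eq_zero fun k _ => ?_
  dsimp only
  by_cases hjk : b j < b k
  · rw [hg hjk, mul_zero]
  · rw [hM i k (by omega), zero_mul]

end BlockStrictUpper

section UpperTriangular

variable [LinearOrder m]

theorem IsUpperTriangular.blockTriangular_of_monotone [Zero R] {α : Type*} [Preorder α]
    {b : m → α} {g : Matrix m m R} (hg : g.IsUpperTriangular) (hb : Monotone b) :
    g.BlockTriangular b :=
  fun _ _ hji => hg (lt_of_not_ge fun hij => hji.not_ge (hb hij))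

variable [Fintype m] [CommRing R] {g h M : Matrix m m R}

theorem IsUpperTriangular.mul_apply_self (hg : g.IsUpperTriangular) (hh : h.IsUpperTriangular)
    (i : m) : (g * h) i i = g i i * h i i := by
  rw [mul_apply]
  refine sum_eq_single i (fun k _ hki => ?_) (by simp)
  rcases lt_or_gt_of_ne hki with hk | hk
  · rw [hg hk, zero_mul]
  · rw [hh hk, mul_zero]

theorem IsUpperTriangular.mul_mul_apply_of_corner (hg : g.IsUpperTriangular)
    (hh : h.IsUpperTriangular) {i l : m}
    (hM : ∀ j k, i ≤ j → k ≤ l → (j, k) ≠ (i, l) → M j k = 0) :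
    (g * M * h) i l = g i i * M i l * h l l := by
  rw [mul_apply, sum_eq_single l, mul_apply, sum_eq_single i]
  · intro j _ hji
    rcases lt_or_gt_of_ne hji with hj | hj
    · rw [hg hj, zero_mul]
    · rw [hM j l hj.le le_rfl (by simp [hji]), mul_zero]
  · simp
  · intro k _ hkl
    rcases lt_or_gt_of_ne hkl with hk | hk
    · rw [mul_apply, sum_eq_zero, zero_mul]
      intro j _
      rcases lt_or_ge j i with hj | hj
      · rw [hg hj, zero_mul]
      · rw [hM j k hj hk.le (by simp [hkl]), mul_zero]
    · rw [hh hk, mul_zero]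
  · simp

variable [DecidableEq m]

theorem IsUpperTriangular.inv (hg : g.IsUpperTriangular) : g⁻¹.IsUpperTriangular := by
  by_cases hdet : IsUnit g.det
  · have := g.invertibleOfIsUnitDet hdet
    exact blockTriangular_inv_of_blockTriangular hg
  · rw [nonsing_inv_apply_not_isUnit g hdet]
    exact blockTriangular_zero

theorem IsUpperTriangular.det_eq_one (hg : g.IsUpperTriangular) (hg1 : ∀ i, g i i = 1) :
    g.det = 1 := by
  simp [det_of_isUpperTriangular hg, hg1]

theorem IsUpperTriangular.inv_apply_self (hg : g.IsUpperTriangular) (hg1 : ∀ i, g i i = 1)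
    (i : m) : g⁻¹ i i = 1 := by
  have hinv : g⁻¹ * g = 1 := nonsing_inv_mul g (by simp [hg.det_eq_one hg1])
  simpa [hg1, hinv] using (hg.inv.mul_apply_self hg i).symm

end UpperTriangular

end Matrix

theorem blk8_monotone : Monotone blk8 := by
  unfold Monotone
  decide

theorem L47_eq_mul_self_apply {K : Type*} [Field K] {Z : Matrix (Fin 8) (Fin 8) K}
    (hZ : BlockStrictUpper blk8 0 Z) : L47 Z = (Z * Z) 2 6 := by
  simp [L47, mul_apply, Fin.sum_univ_eight, hZ 2 0 (by decide), hZ 2 1 (by decide),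
    hZ 2 2 (by decide), hZ 6 6 (by decide), hZ 7 6 (by decide)]

theorem blockStrictUpper_blk8_one_corner {R : Type*} [Zero R] {M : Matrix (Fin 8) (Fin 8) R}
    (hM : BlockStrictUpper blk8 1 M) :
    ∀ j k, 2 ≤ j → k ≤ 6 → (j, k) ≠ (2, 6) → M j k = 0 := by
  have hblk : ∀ j k : Fin 8, 2 ≤ j → k ≤ 6 → (j, k) ≠ (2, 6) → ¬ blk8 j + 1 < blk8 k := by
    decide
  exact fun j k hj hk hjk => hM j k (hblk j k hj hk hjk)

theorem L47_N_invariant_general {K : Type*} [Field K]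
    (X g : Matrix (Fin 8) (Fin 8) K)
    (hX : ∀ a b : Fin 8, ¬ blk8 a < blk8 b → X a b = 0)
    (hg : ∀ a b : Fin 8, b < a → g a b = 0) (hg1 : ∀ a : Fin 8, g a a = 1) :
    L47 (g * X * g⁻¹) = L47 X := by
  have hgu : g.IsUpperTriangular := fun a b => hg a b
  have hX0 : BlockStrictUpper blk8 0 X := hX
  have hconj : BlockStrictUpper blk8 0 (g * X * g⁻¹) :=
    ((hX0.blockTriangular_mul (hgu.blockTriangular_of_monotone blk8_monotone)).mul_blockTriangular
      (hgu.inv.blockTriangular_of_monotone blk8_monotone))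
  have hsq : (g * X * g⁻¹) * (g * X * g⁻¹) = g * (X * X) * g⁻¹ := by
    have hinv : g⁻¹ * g = 1 := nonsing_inv_mul g (by simp [hgu.det_eq_one hg1])
    simp only [Matrix.mul_assoc, ← Matrix.mul_assoc g⁻¹ g, hinv, Matrix.one_mul]
  calc L47 (g * X * g⁻¹) = (g * (X * X) * g⁻¹) 2 6 := by rw [L47_eq_mul_self_apply hconj, hsq]
    _ = g 2 2 * (X * X) 2 6 * g⁻¹ 6 6 :=
      hgu.mul_mul_apply_of_corner hgu.inv (blockStrictUpper_blk8_one_corner (hX0.mul hX0))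
    _ = L47 X := by rw [hg1, hgu.inv_apply_self hg1, one_mul, mul_one, L47_eq_mul_self_apply hX0]

/-- For block sizes `(2,1,3,2)`, the polynomial `L_{(4,7)}` is invariant under
conjugation of the generic nilradical matrix by every upper unitriangular matrix. -/
theorem L47_N_invariant {K : Type*} [Field K] [CharZero K]
    (X g : Matrix (Fin 8) (Fin 8) K)
    (hX : ∀ a b : Fin 8, ¬ blk8 a < blk8 b → X a b = 0)
    (hg : ∀ a b : Fin 8, b < a → g a b = 0) (hg1 : ∀ a : Fin 8, g a a = 1) :
    L47 (g * X * g⁻¹) = L47 X :=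
  L47_N_invariant_general X g hX hg hg1
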